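/- The partial derivative of the Black-Scholes call price with respect to the initial stock price is Φ(d): ∂/∂x c(x,K,r,T,σ) = Φ((ln(x/K) + T(r + σ²/2))/(σ√T)) for all x > 0, where c(x,K,r,T,σ) = x·Φ(d) − K·e^{−rT}·Φ(d − σ√T) with d = (ln(x/K) + T(r + σ²/2))/(σ√T). -/

import Mathlib

/-!
Differentiating `x Φ(d) - K e^{-rT} Φ(d - σ√T)` by the product and chain rules gives
`Φ(d) + (x φ(d) - K e^{-rT} φ(d - σ√T)) ∂d/∂x`, and the bracket vanishes: completing the
square, `φ(d - σ√T) = φ(d) e^{dσ√T - σ²T/2} = φ(d) (x/K) e^{rT}`.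
-/

open MeasureTheory ProbabilityTheory Real Set

/-- Standard normal CDF. -/
noncomputable def Phi (x : ℝ) : ℝ :=
  ∫ y in Set.Iic x, (Real.sqrt (2 * Real.pi))⁻¹ * Real.exp (-(y ^ 2) / 2)

/-- Standard normal density. -/
noncomputable def phi (y : ℝ) : ℝ := (Real.sqrt (2 * Real.pi))⁻¹ * Real.exp (-(y ^ 2) / 2)

/-- Black-Scholes d value. -/
noncomputable def dBS (S₀ K r T σ : ℝ) : ℝ :=
  (Real.log (S₀ / K) + T * (r + σ ^ 2 / 2)) / (σ * Real.sqrt T)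

/-- Black-Scholes call price (closed form). -/
noncomputable def callBS (S₀ K r T σ : ℝ) : ℝ :=
  S₀ * Phi (dBS S₀ K r T σ) - K * Real.exp (-(r * T)) * Phi (dBS S₀ K r T σ - σ * Real.sqrt T)

/-- Black-Scholes put price (via put-call parity). -/
noncomputable def putBS (S₀ K r T σ : ℝ) : ℝ :=
  callBS S₀ K r T σ - S₀ + K * Real.exp (-(r * T))

theorem hasDerivAt_setIntegral_Iic {E : Type*} [NormedAddCommGroup E] [NormedSpace ℝ E]
    [CompleteSpace E] {f : ℝ → E} {x : ℝ} (hf : Integrable f) (hfx : ContinuousAt f x) :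
    HasDerivAt (fun a => ∫ y in Iic a, f y) (f x) x := by
  have hsplit :
      (fun a => ∫ y in Iic a, f y) = fun a => (∫ y in Iic x, f y) + ∫ y in x..a, f y := by
    funext a
    rw [← intervalIntegral.integral_Iic_sub_Iic hf.integrableOn hf.integrableOn, add_sub_cancel]
  rw [hsplit]
  exact (intervalIntegral.integral_hasDerivAt_right hf.intervalIntegrable
    hf.aestronglyMeasurable.stronglyMeasurableAtFilter hfx).const_add _

theorem continuous_phi : Continuous phi := by
  unfold phi
  fun_prop

theorem integrable_phi : Integrable phi := by
  refine ((integrable_exp_neg_mul_sq (b := 1 / 2) (by norm_num)).const_mul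
    (Real.sqrt (2 * π))⁻¹).congr (Filter.Eventually.of_forall fun y => ?_)
  simp only [phi]
  ring_nf

theorem hasDerivAt_Phi (x : ℝ) : HasDerivAt Phi (phi x) x :=
  hasDerivAt_setIntegral_Iic integrable_phi continuous_phi.continuousAt

theorem phi_sub_eq_mul_exp (d s : ℝ) : phi (d - s) = phi d * Real.exp (d * s - s ^ 2 / 2) := by
  simp only [phi, mul_assoc, ← Real.exp_add]
  ring_nf

theorem hasDerivAt_dBS {x K : ℝ} (r T σ : ℝ) (hx : x ≠ 0) (hK : K ≠ 0) :
    HasDerivAt (fun y => dBS y K r T σ) (x⁻¹ / (σ * Real.sqrt T)) x := by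
  have hlog : HasDerivAt (fun y => Real.log (y / K)) x⁻¹ x := by
    convert ((hasDerivAt_id' x).div_const K).log (div_ne_zero hx hK) using 1
    field_simp
  exact (hlog.add_const _).div_const _

theorem dBS_mul_eq (S₀ K r T σ : ℝ) (hσ : σ ≠ 0) (hT : 0 < T) :
    dBS S₀ K r T σ * (σ * Real.sqrt T) = Real.log (S₀ / K) + T * (r + σ ^ 2 / 2) := by
  rw [dBS, div_mul_cancel₀ _ (mul_ne_zero hσ (Real.sqrt_pos.mpr hT).ne')]

theorem mul_phi_dBS_eq {x K : ℝ} (r T σ : ℝ) (hx : 0 < x) (hK : 0 < K) (hσ : σ ≠ 0)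
    (hT : 0 < T) :
    x * phi (dBS x K r T σ) =
      K * Real.exp (-(r * T)) * phi (dBS x K r T σ - σ * Real.sqrt T) := by
  have hexp : Real.exp (dBS x K r T σ * (σ * Real.sqrt T) - (σ * Real.sqrt T) ^ 2 / 2)
      = x / K * Real.exp (r * T) := by
    rw [dBS_mul_eq x K r T σ hσ hT, mul_pow, Real.sq_sqrt hT.le,
      show Real.log (x / K) + T * (r + σ ^ 2 / 2) - σ ^ 2 * T / 2 = Real.log (x / K) + r * T by
        ring,
      Real.exp_add, Real.exp_log (div_pos hx hK)]
  rw [phi_sub_eq_mul_exp, hexp, Real.exp_neg]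
  field_simp

theorem stmt2_general (K σ T r : ℝ) (hK : 0 < K) (hσ : 0 < σ) (hT : 0 < T) :
    ∀ x : ℝ, 0 < x →
      HasDerivAt (fun y => callBS y K r T σ) (Phi (dBS x K r T σ)) x := by
  intro x hx
  have hd := hasDerivAt_dBS r T σ hx.ne' hK.ne'
  have hd₁ := (hasDerivAt_Phi _).comp x hd
  have hd₂ := (hasDerivAt_Phi _).comp x (hd.sub_const (σ * Real.sqrt T))
  have hcall := ((hasDerivAt_id x).mul hd₁).sub (hd₂.const_mul (K * Real.exp (-(r * T))))
  refine hcall.congr_deriv ?_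
  rw [← mul_assoc, ← mul_assoc, ← mul_phi_dBS_eq r T σ hx hK hσ.ne' hT]
  simp

theorem stmt2 (K σ T r : ℝ) (hK : 0 < K) (hσ : 0 < σ) (hT : 0 < T) (hr : 0 ≤ r) :
    ∀ x : ℝ, 0 < x →
      HasDerivAt (fun y => callBS y K r T σ) (Phi (dBS x K r T σ)) x :=
  stmt2_general K σ T r hK hσ hT
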